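/- arXiv:2307.16279 — 3 statements merged into one kernel-verified Lean document; each statement's English description precedes it below -/
import Mathlib

section
/- Let Δ_Z = Σₖ Xₖ Aₖ be a matrix Gaussian series with matrix variance v and weak variance v⋆ := sup over unit vectors u,v of Σₖ σₖ² |u† Aₖ v|². Then v/n ≤ v⋆ ≤ v. -/
/-- The spectral (ℓ²-operator) norm of a square complex matrix. -/
noncomputable def specNorm {n : ℕ} (M : Matrix (Fin n) (Fin n) ℂ) : ℝ :=
  ‖Matrix.toEuclideanCLM (𝕜 := ℂ) M‖

set_option maxHeartbeats 1000000 in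
/-- For a matrix Gaussian series with Hermitian coefficients `Aₖ` and variances
`σₖ²`, the weak variance `v⋆ = sup_{‖u‖=‖w‖=1} Σₖ σₖ² |⟪u, Aₖ w⟫|²` and the
matrix variance `v = ‖Σₖ σₖ² Aₖ²‖` satisfy `v/n ≤ v⋆ ≤ v`. -/
theorem stmt_5 (n K : ℕ) (hn : 0 < n)
    (A : Fin K → Matrix (Fin n) (Fin n) ℂ) (hA : ∀ k, (A k).IsHermitian)
    (σ : Fin K → ℝ) (v vstar : ℝ)
    (hv : v = specNorm (∑ k, ((σ k ^ 2 : ℝ) : ℂ) • (A k * A k)))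
    (hvstar : IsLUB {x : ℝ | ∃ u w : EuclideanSpace ℂ (Fin n), ‖u‖ = 1 ∧ ‖w‖ = 1 ∧
        x = ∑ k, σ k ^ 2 *
          ‖(inner ℂ u (Matrix.toEuclideanCLM (𝕜 := ℂ) (A k) w) : ℂ)‖ ^ 2} vstar) :
    v / n ≤ vstar ∧ vstar ≤ v := by
  classical
  set T : Fin K → (EuclideanSpace ℂ (Fin n) →L[ℂ] EuclideanSpace ℂ (Fin n)) :=
    fun k => Matrix.toEuclideanCLM (𝕜 := ℂ) (A k) with hT
  have hTsa : ∀ k, IsSelfAdjoint (T k) := by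
    intro k
    rw [hT]
    dsimp only
    rw [IsSelfAdjoint, ← map_star]
    exact congrArg _ (hA k)
  have hTswap : ∀ k (x y : EuclideanSpace ℂ (Fin n)),
      (inner ℂ (T k x) y : ℂ) = inner ℂ x (T k y) := fun k x y => by
    rw [← ContinuousLinearMap.adjoint_inner_left (T k) y x,
      ContinuousLinearMap.isSelfAdjoint_iff'.mp (hTsa k)]
  set S : EuclideanSpace ℂ (Fin n) →L[ℂ] EuclideanSpace ℂ (Fin n) :=
    Matrix.toEuclideanCLM (𝕜 := ℂ) (∑ k, ((σ k ^ 2 : ℝ) : ℂ) • (A k * A k)) with hS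
  have hvS : v = ‖S‖ := by rw [hv]; rfl
  have hSapply : ∀ w, S w = ∑ k, ((σ k ^ 2 : ℝ) : ℂ) • T k (T k w) := by
    intro w
    rw [hS, map_sum, ContinuousLinearMap.sum_apply]
    refine Finset.sum_congr rfl fun k _ => ?_
    rw [map_smul, map_mul]
    rfl
  have hmem : ∀ u w : EuclideanSpace ℂ (Fin n), ‖u‖ = 1 → ‖w‖ = 1 →
      (∑ k, σ k ^ 2 * ‖(inner ℂ u (T k w) : ℂ)‖ ^ 2) ≤ vstar := by
    intro u w hu hw
    exact hvstar.1 ⟨u, w, hu, hw, rfl⟩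
  -- key lemma: for unit u, ∑ σ² ‖T k u‖² ≤ n * vstar
  have keyL : ∀ u : EuclideanSpace ℂ (Fin n), ‖u‖ = 1 →
      (∑ k, σ k ^ 2 * ‖T k u‖ ^ 2) ≤ n * vstar := by
    intro u hu
    have hnorm : ∀ k, ‖T k u‖ ^ 2 = ∑ j, ‖T k u j‖ ^ 2 := by
      intro k
      rw [EuclideanSpace.norm_eq, Real.sq_sqrt]
      positivity
    calc ∑ k, σ k ^ 2 * ‖T k u‖ ^ 2
        = ∑ j, ∑ k, σ k ^ 2 * ‖T k u j‖ ^ 2 := by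
          simp_rw [hnorm, Finset.mul_sum]
          exact Finset.sum_comm
      _ ≤ ∑ _j : Fin n, vstar := by
          refine Finset.sum_le_sum fun j _ => ?_
          have h := hmem (EuclideanSpace.single j 1) u
            (by simp [EuclideanSpace.norm_single]) hu
          simpa [EuclideanSpace.inner_single_left] using h
      _ = n * vstar := by
          rw [Finset.sum_const, Finset.card_univ, Fintype.card_fin, nsmul_eq_mul]
  have j0 : Fin n := ⟨0, hn⟩
  have hv0 : 0 ≤ vstar := by
    refine le_trans ?_ (hmem (EuclideanSpace.single j0 1) (EuclideanSpace.single j0 1)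
      (by simp [EuclideanSpace.norm_single]) (by simp [EuclideanSpace.norm_single]))
    positivity
  -- vstar ≤ v
  have h2 : vstar ≤ v := by
    apply hvstar.2
    rintro x ⟨u, w, hu, hw, rfl⟩
    have hterm : ∀ k, (inner ℂ w (((σ k ^ 2 : ℝ) : ℂ) • T k (T k w)) : ℂ)
        = ((σ k ^ 2 * ‖T k w‖ ^ 2 : ℝ) : ℂ) := by
      intro k
      rw [inner_smul_right, ← hTswap k w (T k w), inner_self_eq_norm_sq_to_K]
      push_cast
      rfl
    have hinner : (inner ℂ w (S w) : ℂ) = ((∑ k, σ k ^ 2 * ‖T k w‖ ^ 2 : ℝ) : ℂ) := by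
      rw [hSapply, inner_sum, Complex.ofReal_sum]
      exact Finset.sum_congr rfl fun k _ => hterm k
    calc ∑ k, σ k ^ 2 * ‖(inner ℂ u (T k w) : ℂ)‖ ^ 2
        ≤ ∑ k, σ k ^ 2 * ‖T k w‖ ^ 2 := by
          refine Finset.sum_le_sum fun k _ => ?_
          have h1 : ‖(inner ℂ u (T k w) : ℂ)‖ ≤ ‖T k w‖ := by
            have := norm_inner_le_norm (𝕜 := ℂ) u (T k w)
            rwa [hu, one_mul] at this
          have h2 : ‖(inner ℂ u (T k w) : ℂ)‖ ^ 2 ≤ ‖T k w‖ ^ 2 := by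
            apply sq_le_sq' <;> nlinarith [norm_nonneg (inner ℂ u (T k w) : ℂ)]
          nlinarith [sq_nonneg (σ k)]
      _ = Complex.re (inner ℂ w (S w) : ℂ) := by rw [hinner, Complex.ofReal_re]
      _ ≤ ‖(inner ℂ w (S w) : ℂ)‖ := Complex.re_le_norm _
      _ ≤ ‖w‖ * ‖S w‖ := norm_inner_le_norm _ _
      _ ≤ ‖w‖ * (‖S‖ * ‖w‖) := by
          gcongr
          exact S.le_opNorm w
      _ = v := by rw [hw, hvS]; ring
  refine ⟨?_, h2⟩
  -- v ≤ n * vstar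
  have hSbound : ‖S‖ ≤ n * vstar := by
    apply ContinuousLinearMap.opNorm_le_bound _
      (mul_nonneg (Nat.cast_nonneg n) hv0)
    intro w
    rcases eq_or_ne w 0 with rfl | hw0
    · simp
    have hwn : (0 : ℝ) < ‖w‖ := norm_pos_iff.mpr hw0
    set w' : EuclideanSpace ℂ (Fin n) := ((‖w‖⁻¹ : ℝ) : ℂ) • w with hw'
    have hw'1 : ‖w'‖ = 1 := by
      rw [hw', norm_smul, Complex.norm_real, Real.norm_eq_abs,
        abs_of_pos (inv_pos.mpr hwn), inv_mul_cancel₀ (ne_of_gt hwn)]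
    have hSw' : ‖S w'‖ ≤ n * vstar := by
      rcases eq_or_ne (S w') 0 with h0 | h0
      · rw [h0, norm_zero]
        exact mul_nonneg (Nat.cast_nonneg n) hv0
      have hSwn : (0 : ℝ) < ‖S w'‖ := norm_pos_iff.mpr h0
      set u : EuclideanSpace ℂ (Fin n) := ((‖S w'‖⁻¹ : ℝ) : ℂ) • S w' with hu
      have hu1 : ‖u‖ = 1 := by
        rw [hu, norm_smul, Complex.norm_real, Real.norm_eq_abs,
          abs_of_pos (inv_pos.mpr hSwn), inv_mul_cancel₀ (ne_of_gt hSwn)]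
      have h1 : (inner ℂ u (S w') : ℂ) = ((‖S w'‖ : ℝ) : ℂ) := by
        rw [hu, inner_smul_left, inner_self_eq_norm_sq_to_K]
        rw [Complex.conj_ofReal]
        have hne : ((‖S w'‖ : ℝ) : ℂ) ≠ 0 := Complex.ofReal_ne_zero.mpr (ne_of_gt hSwn)
        push_cast
        show ((‖S w'‖ : ℝ) : ℂ)⁻¹ * ((‖S w'‖ : ℝ) : ℂ) ^ 2 = ((‖S w'‖ : ℝ) : ℂ)
        field_simp
      have h2 : ‖S w'‖ = Complex.re (inner ℂ u (S w') : ℂ) := by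
        rw [h1, Complex.ofReal_re]
      rw [h2]
      calc Complex.re (inner ℂ u (S w') : ℂ)
          ≤ ‖(inner ℂ u (S w') : ℂ)‖ := Complex.re_le_norm _
        _ = ‖∑ k, ((σ k ^ 2 : ℝ) : ℂ) * (inner ℂ (T k u) (T k w') : ℂ)‖ := by
            rw [hSapply, inner_sum]
            congr 1
            refine Finset.sum_congr rfl fun k _ => ?_
            rw [inner_smul_right, hTswap k u (T k w')]
        _ ≤ ∑ k, ‖((σ k ^ 2 : ℝ) : ℂ) * (inner ℂ (T k u) (T k w') : ℂ)‖ :=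
            norm_sum_le _ _
        _ ≤ ∑ k, σ k ^ 2 * (‖T k u‖ * ‖T k w'‖) := by
            refine Finset.sum_le_sum fun k _ => ?_
            rw [norm_mul, Complex.norm_real, Real.norm_eq_abs, abs_of_nonneg (sq_nonneg _)]
            exact mul_le_mul_of_nonneg_left (norm_inner_le_norm _ _) (sq_nonneg _)
        _ ≤ ∑ k, σ k ^ 2 * ((‖T k u‖ ^ 2 + ‖T k w'‖ ^ 2) / 2) := by
            refine Finset.sum_le_sum fun k _ => ?_
            have := sq_nonneg (‖T k u‖ - ‖T k w'‖)
            nlinarith [sq_nonneg (σ k)]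
        _ = ((∑ k, σ k ^ 2 * ‖T k u‖ ^ 2) + ∑ k, σ k ^ 2 * ‖T k w'‖ ^ 2) / 2 := by
            rw [← Finset.sum_add_distrib, Finset.sum_div]
            exact Finset.sum_congr rfl fun k _ => by ring
        _ ≤ ((n * vstar) + (n * vstar)) / 2 := by
            gcongr
            · exact keyL u hu1
            · exact keyL w' hw'1
        _ = n * vstar := by ring
    have hSww' : S w = ((‖w‖ : ℝ) : ℂ) • S w' := by
      rw [hw', map_smul, smul_smul]
      norm_cast
      rw [mul_inv_cancel₀ (ne_of_gt hwn), one_smul]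
    calc ‖S w‖ = ‖w‖ * ‖S w'‖ := by
          rw [hSww', norm_smul, Complex.norm_real, Real.norm_eq_abs, abs_of_pos hwn]
      _ ≤ ‖w‖ * (n * vstar) := by
          exact mul_le_mul_of_nonneg_left hSw' (le_of_lt hwn)
      _ = (n * vstar) * ‖w‖ := by ring
  rw [div_le_iff₀ (by exact_mod_cast hn)]
  rw [hvS]
  calc ‖S‖ ≤ n * vstar := hSbound
    _ = vstar * n := by ring
end

section
/- Fix n ≥ 2 and M > 0. For m = (m₀,…,m_{n−1}) positive reals with Σ mₖ = M, and for 1 ≤ l ≤ ⌊n/2⌋, define v_l(m) := 2V²(δ/m₀ + Σ_{k=1}^{l−1} 4/mₖ + Σ_{k=l}^{n−l} 2/mₖ) with constants V > 0 and δ ∈ {0,1}. Then min over m of max over l of v_l(m) equals v₁(m⁽¹⁾) = (2V²/M)·(√2(n−1) + δ)², attained at m₀ = Mδ/(√2(n−1)+δ) and mₖ = √2·M/(√2(n−1)+δ) for k ≥ 1. -/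
/-- Minimax shot allocation for the Toeplitz error matrix: with
`v_l(m) = 2V²(δ/m₀ + Σ_{k=1}^{l−1} 4/mₖ + Σ_{k=l}^{n−l} 2/mₖ)`, the minimum over
feasible `m` (positive, total `M`) of `max_{1≤l≤⌊n/2⌋} v_l(m)` equals
`(2V²/M)(√2(n−1)+δ)²`, attained at `m₀ = Mδ/(√2(n−1)+δ)`,
`mₖ = √2·M/(√2(n−1)+δ)` for `k ≥ 1`. -/
theorem stmt_8 (n : ℕ) (hn : 2 ≤ n) (M V δ : ℝ) (hM : 0 < M) (hV : 0 < V)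
    (hδ : δ = 0 ∨ δ = 1)
    (v : (ℕ → ℝ) → ℕ → ℝ)
    (hv : ∀ m l, v m l = 2 * V ^ 2 * (δ / m 0
      + (∑ k ∈ Finset.Icc 1 (l - 1), 4 / m k)
      + ∑ k ∈ Finset.Icc l (n - l), 2 / m k))
    (mopt : ℕ → ℝ)
    (hmopt : ∀ k, mopt k = if k = 0 then M * δ / (Real.sqrt 2 * (n - 1) + δ)
      else Real.sqrt 2 * M / (Real.sqrt 2 * (n - 1) + δ)) :
    ((∑ k ∈ Finset.range n, mopt k) = M ∧
      (Finset.Icc 1 (n / 2)).sup'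
          (Finset.nonempty_Icc.mpr (by omega : 1 ≤ n / 2)) (v mopt)
        = 2 * V ^ 2 / M * (Real.sqrt 2 * (n - 1) + δ) ^ 2) ∧
    ∀ m : ℕ → ℝ, (∀ k, k < n → 0 < m k) → (∑ k ∈ Finset.range n, m k) = M →
      2 * V ^ 2 / M * (Real.sqrt 2 * (n - 1) + δ) ^ 2
        ≤ (Finset.Icc 1 (n / 2)).sup'
            (Finset.nonempty_Icc.mpr (by omega : 1 ≤ n / 2)) (v m) := by
  have h2 : (0:ℝ) < Real.sqrt 2 := by positivity
  have h22 : Real.sqrt 2 * Real.sqrt 2 = 2 := Real.mul_self_sqrt (by norm_num)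
  have hδ0 : (0:ℝ) ≤ δ := by rcases hδ with h | h <;> simp [h]
  have hn1 : (1:ℝ) ≤ (n:ℝ) - 1 := by
    have : (2:ℝ) ≤ (n:ℝ) := by exact_mod_cast hn
    linarith
  set s : ℝ := Real.sqrt 2 * ((n:ℝ) - 1) + δ with hs_def
  have hs : 0 < s := by
    have : 0 < Real.sqrt 2 * ((n:ℝ) - 1) := by nlinarith
    rw [hs_def]; linarith
  have hrange : Finset.range n = insert 0 (Finset.Icc 1 (n-1)) := by
    ext k; simp [Finset.mem_Icc]; omega
  have hcard1 : ((n-1 : ℕ) : ℝ) = (n:ℝ) - 1 := by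
    have h1n : 1 ≤ n := by omega
    push_cast [h1n]; ring
  have h1mem : 1 ∈ Finset.Icc 1 (n/2) := by
    simp [Finset.mem_Icc]; omega
  -- the optimal allocation is feasible
  have hsum : (∑ k ∈ Finset.range n, mopt k) = M := by
    rw [hrange, Finset.sum_insert (by simp)]
    rw [Finset.sum_congr rfl (fun k hk => by
      rw [hmopt k, if_neg]; simp [Finset.mem_Icc] at hk; omega)]
    rw [Finset.sum_const, Nat.card_Icc, hmopt 0, if_pos rfl]
    simp only [nsmul_eq_mul]
    rw [show n - 1 + 1 - 1 = n - 1 from rfl, hcard1]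
    field_simp
    ring
  -- value of v mopt on each l
  have hδm : δ / mopt 0 = δ * s / M := by
    rw [hmopt 0, if_pos rfl]
    rcases hδ with h | h
    · simp [h]
    · rw [h]; field_simp
  have key1 : 4 / (Real.sqrt 2 * M / s) = 2 * Real.sqrt 2 * s / M := by
    rw [div_div_eq_mul_div, div_eq_div_iff (by positivity) hM.ne']
    linear_combination (-2*s*M)*h22
  have key2 : 2 / (Real.sqrt 2 * M / s) = Real.sqrt 2 * s / M := by
    rw [div_div_eq_mul_div, div_eq_div_iff (by positivity) hM.ne']
    linear_combination (-s*M)*h22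
  have hconst : ∀ l ∈ Finset.Icc 1 (n/2), v mopt l = 2 * V ^ 2 / M * s ^ 2 := by
    intro l hl
    simp only [Finset.mem_Icc] at hl
    obtain ⟨hl1, hl2⟩ := hl
    have hln : 2 * l ≤ n := by omega
    rw [hv]
    have e1 : (∑ k ∈ Finset.Icc 1 (l - 1), 4 / mopt k)
        = ∑ _k ∈ Finset.Icc 1 (l - 1), (2 * Real.sqrt 2 * s / M) :=
      Finset.sum_congr rfl (fun k hk => by
        rw [hmopt k, if_neg, key1]; simp [Finset.mem_Icc] at hk; omega)
    have e2 : (∑ k ∈ Finset.Icc l (n - l), 2 / mopt k)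
        = ∑ _k ∈ Finset.Icc l (n - l), (Real.sqrt 2 * s / M) :=
      Finset.sum_congr rfl (fun k hk => by
        rw [hmopt k, if_neg, key2]; simp [Finset.mem_Icc] at hk; omega)
    rw [e1, e2, hδm, Finset.sum_const, Finset.sum_const, Nat.card_Icc, Nat.card_Icc]
    have c1 : ((l - 1 + 1 - 1 : ℕ) : ℝ) = (l:ℝ) - 1 := by
      push_cast [show l - 1 + 1 - 1 = l - 1 from rfl, hl1]; ring
    have c2 : ((n - l + 1 - l : ℕ) : ℝ) = (n:ℝ) - 2*l + 1 := by
      have ha : l ≤ n - l + 1 := by omega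
      have hb : l ≤ n := by omega
      push_cast [Nat.cast_sub ha, Nat.cast_sub hb]; ring
    simp only [nsmul_eq_mul, c1, c2]
    rw [hs_def]
    field_simp
    ring
  refine ⟨⟨hsum, ?_⟩, ?_⟩
  · -- sup' of a constant function
    refine le_antisymm (Finset.sup'_le _ _ fun l hl => (hconst l hl).le) ?_
    exact (hconst 1 h1mem).ge.trans (Finset.le_sup' (v mopt) h1mem)
  · -- lower bound for any feasible allocation
    intro m hm hsum'
    refine le_trans ?_ (Finset.le_sup' (v m) h1mem)
    rw [hv]
    set f : ℕ → ℝ := fun k => if k = 0 then δ else Real.sqrt 2 with hf_def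
    have hCS := Finset.sq_sum_div_le_sum_sq_div (Finset.range n) f
      (g := m) (fun i hi => hm i (Finset.mem_range.mp hi))
    rw [hsum'] at hCS
    have hfsum : (∑ k ∈ Finset.range n, f k) = s := by
      rw [hrange, Finset.sum_insert (by simp)]
      rw [Finset.sum_congr rfl (fun k hk => by
        show f k = Real.sqrt 2
        rw [hf_def]; simp only; rw [if_neg]; simp [Finset.mem_Icc] at hk; omega)]
      rw [Finset.sum_const, Nat.card_Icc, nsmul_eq_mul,
        show n - 1 + 1 - 1 = n - 1 from rfl, hcard1]
      simp only [hf_def, if_pos rfl]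
      rw [hs_def]; ring
    have hT : (∑ k ∈ Finset.range n, f k ^ 2 / m k)
        = δ / m 0 + ∑ k ∈ Finset.Icc 1 (n - 1), 2 / m k := by
      rw [hrange, Finset.sum_insert (by simp)]
      congr 1
      · simp only [hf_def, if_pos rfl]
        rcases hδ with h | h <;> rw [h] <;> norm_num
      · refine Finset.sum_congr rfl (fun k hk => ?_)
        simp only [hf_def]
        rw [if_neg (by simp [Finset.mem_Icc] at hk; omega)]
        rw [Real.sq_sqrt (by norm_num)]
    rw [hfsum, hT] at hCS
    rw [show Finset.Icc 1 (1-1) = (∅ : Finset ℕ) by rfl, Finset.sum_empty]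
    have hT0 : (0:ℝ) ≤ 2 * V ^ 2 := by positivity
    calc 2 * V ^ 2 / M * s ^ 2 = 2 * V ^ 2 * (s ^ 2 / M) := by ring
      _ ≤ 2 * V ^ 2 * (δ / m 0 + ∑ k ∈ Finset.Icc 1 (n - 1), 2 / m k) :=
          mul_le_mul_of_nonneg_left hCS hT0
      _ = 2 * V ^ 2 * (δ / m 0 + 0 + ∑ k ∈ Finset.Icc 1 (n - 1), 2 / m k) := by ring
end

section
/- Fix n ≥ 1 and M > 0. For positive reals m_{kl} indexed by 1 ≤ k ≤ l ≤ n with Σ m_{kl} = M, define for each k: v_k(m) := 2c²(1/m_{kk} + Σ_{l≠k} 2/m_{ord(k,l)}) where c > 0 and ord orders the pair. Then min over m of max over k of v_k(m) equals 2c²n³/M, attained at m_{kk} = M/n² and m_{kl} = 2M/n² for k < l. -/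
open Finset

lemma filterLeSplit {n : ℕ} (k : Fin n) :
    (Finset.univ.filter (fun l => k ≤ l)) = insert k (Finset.univ.filter (fun l => k < l)) := by
  ext l
  simp [le_iff_lt_or_eq, eq_comm, or_comm]

lemma sumLeSplit {n : ℕ} (f : Fin n → Fin n → ℝ) :
    (∑ k : Fin n, ∑ l ∈ Finset.univ.filter (fun l => k ≤ l), f k l)
      = (∑ k : Fin n, f k k) + ∑ k : Fin n, ∑ l ∈ Finset.univ.filter (fun l => k < l), f k l := by
  rw [← Finset.sum_add_distrib]
  refine Finset.sum_congr rfl fun k _ => ?_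
  rw [filterLeSplit, Finset.sum_insert (by simp)]

lemma pairSum {n : ℕ} (f : Fin n → Fin n → ℝ) :
    ∑ k : Fin n, ∑ l ∈ Finset.univ.erase k, f (min k l) (max k l)
      = 2 * ∑ k : Fin n, ∑ l ∈ Finset.univ.filter (fun l => k < l), f k l := by
  have herase : ∀ k : Fin n, Finset.univ.erase k
      = (Finset.univ.filter (fun l => k < l)) ∪ (Finset.univ.filter (fun l => l < k)) := by
    intro k; ext l
    simp [Finset.mem_erase, lt_or_lt_iff_ne, ne_comm, eq_comm]
  have hdisj : ∀ k : Fin n, Disjoint (Finset.univ.filter (fun l => k < l))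
      (Finset.univ.filter (fun l => l < k)) := by
    intro k
    simp only [Finset.disjoint_filter, Finset.mem_filter]
    intro l _ h h'
    exact absurd (h.trans h') (lt_irrefl _)
  have key : ∀ k : Fin n, ∑ l ∈ Finset.univ.erase k, f (min k l) (max k l)
      = (∑ l ∈ Finset.univ.filter (fun l => k < l), f k l)
        + ∑ l ∈ Finset.univ.filter (fun l => l < k), f l k := by
    intro k
    rw [herase k, Finset.sum_union (hdisj k)]
    congr 1
    · refine Finset.sum_congr rfl fun l hl => ?_
      simp only [Finset.mem_filter] at hl
      rw [min_eq_left hl.2.le, max_eq_right hl.2.le]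
    · refine Finset.sum_congr rfl fun l hl => ?_
      simp only [Finset.mem_filter] at hl
      rw [min_eq_right hl.2.le, max_eq_left hl.2.le]
  have hswap : (∑ k : Fin n, ∑ l ∈ Finset.univ.filter (fun l => l < k), f l k)
      = ∑ k : Fin n, ∑ l ∈ Finset.univ.filter (fun l => k < l), f k l := by
    rw [Finset.sum_comm' (t' := Finset.univ)
      (s' := fun l => Finset.univ.filter (fun k => l < k))]
    intro k l
    simp
  simp only [key, Finset.sum_add_distrib, hswap]
  ring

/-- Minimax shot allocation for the non-Toeplitz Hermitian error matrix: with
`v_k(m) = 2c²(1/m_{kk} + Σ_{l≠k} 2/m_{ord(k,l)})`, the minimum over feasible `m`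
(positive on pairs `k ≤ l`, total `M`) of `max_k v_k(m)` equals `2c²n³/M`,
attained at `m_{kk} = M/n²`, `m_{kl} = 2M/n²` for `k < l`. -/
theorem stmt_11 (n : ℕ) (hn : 1 ≤ n) (M c : ℝ) (hM : 0 < M) (hc : 0 < c)
    (v : (Fin n → Fin n → ℝ) → Fin n → ℝ)
    (hv : ∀ m k, v m k = 2 * c ^ 2 * (1 / m k k
      + ∑ l ∈ Finset.univ.erase k, 2 / m (min k l) (max k l)))
    (mopt : Fin n → Fin n → ℝ)
    (hmopt : ∀ k l : Fin n, mopt k l =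
      if k = l then M / (n : ℝ) ^ 2 else 2 * M / (n : ℝ) ^ 2) :
    ((∑ k : Fin n, ∑ l ∈ Finset.univ.filter (fun l => k ≤ l), mopt k l) = M ∧
      Finset.univ.sup' ⟨⟨0, hn⟩, Finset.mem_univ _⟩ (v mopt)
        = 2 * c ^ 2 * (n : ℝ) ^ 3 / M) ∧
    ∀ m : Fin n → Fin n → ℝ, (∀ k l : Fin n, k ≤ l → 0 < m k l) →
      (∑ k : Fin n, ∑ l ∈ Finset.univ.filter (fun l => k ≤ l), m k l) = M →
      2 * c ^ 2 * (n : ℝ) ^ 3 / M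
        ≤ Finset.univ.sup' ⟨⟨0, hn⟩, Finset.mem_univ _⟩ (v m) := by
  have hn1 : (1 : ℝ) ≤ (n : ℝ) := by exact_mod_cast hn
  have hn0 : (0 : ℝ) < (n : ℝ) := lt_of_lt_of_le one_pos hn1
  have hcard_erase : ∀ k : Fin n, ((Finset.univ.erase k).card : ℝ) = (n : ℝ) - 1 := by
    intro k
    rw [Finset.card_erase_of_mem (Finset.mem_univ k)]
    simp [Nat.cast_sub hn]
  -- count of strict pairs
  have hNcard : (∑ k : Fin n, ((Finset.univ.filter (fun l => k < l)).card : ℝ))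
      = (n : ℝ) * ((n : ℝ) - 1) / 2 := by
    have h1 := pairSum (n := n) (fun _ _ => (1 : ℝ))
    simp only [Finset.sum_const, nsmul_eq_mul, mul_one] at h1
    rw [Finset.sum_congr rfl (fun k _ => hcard_erase k), Finset.sum_const,
      Finset.card_univ, Fintype.card_fin, nsmul_eq_mul] at h1
    linarith
  constructor
  · constructor
    · -- total of mopt is M
      rw [sumLeSplit]
      have hdiag : (∑ k : Fin n, mopt k k) = (n : ℝ) * (M / (n : ℝ) ^ 2) := by
        rw [Finset.sum_congr rfl (fun k _ => by rw [hmopt k k, if_pos rfl]),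
          Finset.sum_const, Finset.card_univ, Fintype.card_fin, nsmul_eq_mul]
      have hoff : (∑ k : Fin n, ∑ l ∈ Finset.univ.filter (fun l => k < l), mopt k l)
          = ((n : ℝ) * ((n : ℝ) - 1) / 2) * (2 * M / (n : ℝ) ^ 2) := by
        rw [← hNcard, Finset.sum_mul]
        refine Finset.sum_congr rfl fun k _ => ?_
        rw [Finset.sum_congr rfl (fun l hl => by
          simp only [Finset.mem_filter] at hl
          rw [hmopt k l, if_neg (ne_of_lt hl.2)]), Finset.sum_const, nsmul_eq_mul]
      rw [hdiag, hoff]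
      field_simp
      ring
    · -- sup' of v mopt
      have hval : ∀ k : Fin n, v mopt k = 2 * c ^ 2 * (n : ℝ) ^ 3 / M := by
        intro k
        rw [hv]
        have hkk : mopt k k = M / (n : ℝ) ^ 2 := by rw [hmopt, if_pos rfl]
        have hsum : (∑ l ∈ Finset.univ.erase k, 2 / mopt (min k l) (max k l))
            = ((n : ℝ) - 1) * (2 / (2 * M / (n : ℝ) ^ 2)) := by
          rw [Finset.sum_congr rfl (fun l hl => by
            have hne : min k l ≠ max k l := by
              rw [Finset.mem_erase] at hl
              exact ne_of_lt (min_lt_max.mpr (Ne.symm hl.1))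
            rw [hmopt, if_neg hne]), Finset.sum_const, nsmul_eq_mul, hcard_erase]
        rw [hkk, hsum]
        field_simp
        ring
      refine le_antisymm (Finset.sup'_le _ _ fun k _ => (hval k).le) ?_
      have hle := Finset.le_sup' (v mopt) (Finset.mem_univ (⟨0, hn⟩ : Fin n))
      rwa [hval ⟨0, hn⟩] at hle
  · -- minimality
    intro m hpos hsum
    set S := Finset.univ.sup' ⟨⟨0, hn⟩, Finset.mem_univ _⟩ (v m) with hS
    have hSsum : (∑ k : Fin n, v m k) ≤ (n : ℝ) * S := by
      calc (∑ k : Fin n, v m k) ≤ ∑ _k : Fin n, S :=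
            Finset.sum_le_sum fun k _ => Finset.le_sup' (v m) (Finset.mem_univ k)
        _ = (n : ℝ) * S := by
            rw [Finset.sum_const, Finset.card_univ, Fintype.card_fin, nsmul_eq_mul]
    set a : ℝ := (n : ℝ) ^ 2 / M with ha
    have ha0 : 0 < a := by positivity
    have tang1 : ∀ x : ℝ, 0 < x → 2 * a - a ^ 2 * x ≤ 1 / x := by
      intro x hx
      rw [← sub_nonneg]
      have h : 1 / x - (2 * a - a ^ 2 * x) = (1 - a * x) ^ 2 / x := by
        field_simp; ring
      rw [h]; positivity
    have tang4 : ∀ x : ℝ, 0 < x → 4 * a - a ^ 2 * x ≤ 4 / x := by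
      intro x hx
      rw [← sub_nonneg]
      have h : 4 / x - (4 * a - a ^ 2 * x) = (2 - a * x) ^ 2 / x := by
        field_simp; ring
      rw [h]; positivity
    -- rewrite sum of v
    have hvsum : (∑ k : Fin n, v m k)
        = 2 * c ^ 2 * ((∑ k : Fin n, 1 / m k k)
            + ∑ k : Fin n, ∑ l ∈ Finset.univ.filter (fun l => k < l), 4 / m k l) := by
      simp only [hv]
      rw [← Finset.mul_sum, Finset.sum_add_distrib, pairSum (fun k l => 2 / m k l)]
      congr 1
      congr 1
      rw [Finset.mul_sum]
      refine Finset.sum_congr rfl fun k _ => ?_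
      rw [Finset.mul_sum]
      exact Finset.sum_congr rfl fun l _ => by ring
    have hM' := hsum
    rw [sumLeSplit] at hM'
    have hdiag_lb : (n : ℝ) * (2 * a) - a ^ 2 * (∑ k : Fin n, m k k)
        ≤ ∑ k : Fin n, 1 / m k k := by
      rw [Finset.mul_sum]
      calc (n : ℝ) * (2 * a) - ∑ k : Fin n, a ^ 2 * m k k
          = ∑ k : Fin n, (2 * a - a ^ 2 * m k k) := by
            rw [Finset.sum_sub_distrib, Finset.sum_const, Finset.card_univ,
              Fintype.card_fin, nsmul_eq_mul]
        _ ≤ _ := Finset.sum_le_sum fun k _ => tang1 _ (hpos k k le_rfl)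
    have hoff_lb : ((n : ℝ) * ((n : ℝ) - 1) / 2) * (4 * a)
          - a ^ 2 * (∑ k : Fin n, ∑ l ∈ Finset.univ.filter (fun l => k < l), m k l)
        ≤ ∑ k : Fin n, ∑ l ∈ Finset.univ.filter (fun l => k < l), 4 / m k l := by
      have : (∑ k : Fin n, ∑ l ∈ Finset.univ.filter (fun l => k < l),
            (4 * a - a ^ 2 * m k l))
          ≤ ∑ k : Fin n, ∑ l ∈ Finset.univ.filter (fun l => k < l), 4 / m k l := by
        refine Finset.sum_le_sum fun k _ => Finset.sum_le_sum fun l hl => ?_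
        simp only [Finset.mem_filter] at hl
        exact tang4 _ (hpos k l hl.2.le)
      have e1 : ∀ k : Fin n, (∑ l ∈ Finset.univ.filter (fun l => k < l), (4 * a - a ^ 2 * m k l))
          = ((Finset.univ.filter (fun l => k < l)).card : ℝ) * (4 * a)
            - a ^ 2 * ∑ l ∈ Finset.univ.filter (fun l => k < l), m k l := by
        intro k
        rw [Finset.sum_sub_distrib, Finset.sum_const, nsmul_eq_mul, Finset.mul_sum]
      refine le_trans (le_of_eq ?_) this
      simp only [e1]
      rw [Finset.sum_sub_distrib, ← Finset.sum_mul, hNcard, ← Finset.mul_sum]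
    -- combine
    have hlb : 2 * c ^ 2 * (n : ℝ) ^ 4 / M ≤ ∑ k : Fin n, v m k := by
      rw [hvsum]
      have hc2 : (0 : ℝ) < 2 * c ^ 2 := by positivity
      have hkey : (n : ℝ) ^ 4 / M
          ≤ (∑ k : Fin n, 1 / m k k)
            + ∑ k : Fin n, ∑ l ∈ Finset.univ.filter (fun l => k < l), 4 / m k l := by
        have halg : (n : ℝ) ^ 4 / M
            = ((n : ℝ) * (2 * a) - a ^ 2 * (∑ k : Fin n, m k k))
              + (((n : ℝ) * ((n : ℝ) - 1) / 2) * (4 * a)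
                - a ^ 2 * (∑ k : Fin n, ∑ l ∈ Finset.univ.filter (fun l => k < l), m k l)) := by
          have hDQ : (∑ k : Fin n, ∑ l ∈ Finset.univ.filter (fun l => k < l), m k l)
              = M - ∑ k : Fin n, m k k := by linarith [hM']
          rw [hDQ, ha]
          field_simp
          ring
        rw [halg]
        exact add_le_add hdiag_lb hoff_lb
      calc 2 * c ^ 2 * (n : ℝ) ^ 4 / M = 2 * c ^ 2 * ((n : ℝ) ^ 4 / M) := by ring
        _ ≤ _ := by exact mul_le_mul_of_nonneg_left hkey (le_of_lt hc2)
    have : 2 * c ^ 2 * (n : ℝ) ^ 4 / M ≤ (n : ℝ) * S := le_trans hlb hSsum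
    rw [div_le_iff₀ hM] at this ⊢
    nlinarith [this]
end
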